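/- (Hasimoto's theorem.) Suppose the curve evolves by the vortex filament equation ∂γ/∂t = k B (i.e. ν = μ = 0 and α = k), and suppose ∂M/∂t = iR M + ω T for a real-valued function R(s,t), where ω = ⟨∂M/∂t, T⟩. Then there exists a real-valued function A of t alone such that the Hasimoto wave function satisfies the focusing cubic nonlinear Schrödinger equation i ∂ψ/∂t + ∂²ψ/∂s² + (1/2)|ψ|² ψ = A(t) ψ. -/

import Mathlib

open scoped BigOperators RealInnerProductSpace
open Complex

noncomputable section

abbrev E3 : Type := EuclideanSpace ℝ (Fin 3)

/-- Partial derivative with respect to the first (arclength) variable. -/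
noncomputable def dS {V : Type} [NormedAddCommGroup V] [NormedSpace ℝ V]
    (F : ℝ → ℝ → V) : ℝ → ℝ → V := fun s t => deriv (fun x => F x t) s

/-- Partial derivative with respect to the second (time) variable. -/
noncomputable def dT {V : Type} [NormedAddCommGroup V] [NormedSpace ℝ V]
    (F : ℝ → ℝ → V) : ℝ → ℝ → V := fun s t => deriv (fun x => F s x) t

/-- Complexification of a real vector in `ℝ³`. -/
noncomputable def cvec (v : E3) : Fin 3 → ℂ := fun i => (v i : ℂ)

/-- Bilinear extension of the real inner product to `ℂ³`. -/
noncomputable def cip (u v : Fin 3 → ℂ) : ℂ := ∑ i, u i * v i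

/-- The phase `θ(s,t) = ∫₀^s τ(s',t) ds'`. -/
noncomputable def θf (τ : ℝ → ℝ → ℝ) : ℝ → ℝ → ℝ :=
  fun s t => ∫ x in (0:ℝ)..s, τ x t

/-- The Hasimoto wave function `ψ = k e^{iθ}`. -/
noncomputable def ψf (k τ : ℝ → ℝ → ℝ) : ℝ → ℝ → ℂ :=
  fun s t => (k s t : ℂ) * Complex.exp (Complex.I * (θf τ s t : ℂ))

/-- The complexified frame vector `M = (N + iB) e^{iθ}`. -/
noncomputable def Mf (N B : ℝ → ℝ → E3) (τ : ℝ → ℝ → ℝ) : ℝ → ℝ → (Fin 3 → ℂ) :=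
  fun s t => Complex.exp (Complex.I * (θf τ s t : ℂ)) •
    (cvec (N s t) + Complex.I • cvec (B s t))

/-- `ω = ⟨∂M/∂t, T⟩` (bilinear inner product). -/
noncomputable def ωf (T N B : ℝ → ℝ → E3) (τ : ℝ → ℝ → ℝ) : ℝ → ℝ → ℂ :=
  fun s t => cip (dT (Mf N B τ) s t) (cvec (T s t))

section aux
variable {V : Type} [NormedAddCommGroup V] [NormedSpace ℝ V] {F : ℝ → ℝ → V}

lemma contDiff_slice1 (h : ContDiff ℝ (⊤ : ℕ∞) (Function.uncurry F)) (t : ℝ) :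
    ContDiff ℝ (⊤ : ℕ∞) (fun s => F s t) := h.comp (contDiff_id.prodMk contDiff_const)

lemma contDiff_slice2 (h : ContDiff ℝ (⊤ : ℕ∞) (Function.uncurry F)) (s : ℝ) :
    ContDiff ℝ (⊤ : ℕ∞) (fun t => F s t) := h.comp (contDiff_const.prodMk contDiff_id)

lemma hasDerivAt_dS (h : ContDiff ℝ (⊤ : ℕ∞) (Function.uncurry F)) (s t : ℝ) :
    HasDerivAt (fun x => F x t) (dS F s t) s :=
  (((contDiff_slice1 h t).differentiable (by simp)) s).hasDerivAt

lemma hasDerivAt_dT (h : ContDiff ℝ (⊤ : ℕ∞) (Function.uncurry F)) (s t : ℝ) :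
    HasDerivAt (fun x => F s x) (dT F s t) t :=
  (((contDiff_slice2 h s).differentiable (by simp)) t).hasDerivAt

lemma key_dS (h : ContDiff ℝ (⊤ : ℕ∞) (Function.uncurry F)) (p : ℝ × ℝ) :
    HasDerivAt (fun x => F x p.2) ((fderiv ℝ (Function.uncurry F) p) (1, 0)) p.1 := by
  have h1 : HasFDerivAt (Function.uncurry F) (fderiv ℝ (Function.uncurry F) p) p :=
    (h.differentiable (by simp) p).hasFDerivAt
  have h2 : HasDerivAt (fun x : ℝ => (x, p.2)) ((1:ℝ), (0:ℝ)) p.1 :=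
    (hasDerivAt_id p.1).prodMk (hasDerivAt_const p.1 p.2)
  exact h1.comp_hasDerivAt p.1 h2

lemma key_dT (h : ContDiff ℝ (⊤ : ℕ∞) (Function.uncurry F)) (p : ℝ × ℝ) :
    HasDerivAt (fun x => F p.1 x) ((fderiv ℝ (Function.uncurry F) p) (0, 1)) p.2 := by
  have h1 : HasFDerivAt (Function.uncurry F) (fderiv ℝ (Function.uncurry F) p) p :=
    (h.differentiable (by simp) p).hasFDerivAt
  have h2 : HasDerivAt (fun x : ℝ => (p.1, x)) ((0:ℝ), (1:ℝ)) p.2 :=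
    (hasDerivAt_const p.2 p.1).prodMk (hasDerivAt_id p.2)
  exact h1.comp_hasDerivAt p.2 h2

lemma contDiff_dS (h : ContDiff ℝ (⊤ : ℕ∞) (Function.uncurry F)) :
    ContDiff ℝ (⊤ : ℕ∞) (Function.uncurry (dS F)) := by
  have heq : Function.uncurry (dS F) =
      fun p => (fderiv ℝ (Function.uncurry F) p) (1, 0) := by
    funext p; exact (key_dS h p).deriv
  rw [heq]
  exact (h.fderiv_right (by simp)).clm_apply contDiff_const

lemma contDiff_dT (h : ContDiff ℝ (⊤ : ℕ∞) (Function.uncurry F)) :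
    ContDiff ℝ (⊤ : ℕ∞) (Function.uncurry (dT F)) := by
  have heq : Function.uncurry (dT F) =
      fun p => (fderiv ℝ (Function.uncurry F) p) (0, 1) := by
    funext p; exact (key_dT h p).deriv
  rw [heq]
  exact (h.fderiv_right (by simp)).clm_apply contDiff_const

end aux

section prim
variable {G : ℝ → ℝ → ℝ}

lemma hasDerivAt_prim_fst (h : ContDiff ℝ (⊤ : ℕ∞) (Function.uncurry G)) (s t : ℝ) :
    HasDerivAt (fun x => ∫ u in (0:ℝ)..x, G u t) (G s t) s := by
  have hc : Continuous (fun x => G x t) := (contDiff_slice1 h t).continuous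
  exact intervalIntegral.integral_hasDerivAt_right (hc.intervalIntegrable _ _)
    (hc.stronglyMeasurableAtFilter _ _) hc.continuousAt

lemma hasDerivAt_prim_snd (h : ContDiff ℝ (⊤ : ℕ∞) (Function.uncurry G)) (s t : ℝ) :
    HasDerivAt (fun y => ∫ u in (0:ℝ)..s, G u y) (∫ u in (0:ℝ)..s, dT G u t) t := by
  have hGt : ContDiff ℝ (⊤ : ℕ∞) (Function.uncurry (dT G)) := contDiff_dT h
  obtain ⟨C, hC⟩ : ∃ C, ∀ p ∈ (Set.uIcc (0:ℝ) s) ×ˢ (Set.Icc (t-1) (t+1)),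
      ‖Function.uncurry (dT G) p‖ ≤ C :=
    (isCompact_uIcc.prod isCompact_Icc).exists_bound_of_continuousOn hGt.continuous.continuousOn
  have hball : Metric.ball t 1 ⊆ Set.Icc (t-1) (t+1) := by
    intro y hy
    have := abs_lt.1 (by simpa [Real.dist_eq] using (Metric.mem_ball.1 hy))
    exact ⟨by linarith [this.1], by linarith [this.2]⟩
  exact (intervalIntegral.hasDerivAt_integral_of_dominated_loc_of_deriv_le
    (F := fun y x => G x y) (F' := fun y x => dT G x y) (x₀ := t) (a := (0:ℝ)) (b := s)
    (bound := fun _ => C) (s := Metric.ball t 1) (Metric.ball_mem_nhds t one_pos)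
    (Filter.Eventually.of_forall (fun y =>
      ((contDiff_slice1 h y).continuous.aestronglyMeasurable)))
    (((contDiff_slice1 h t).continuous).intervalIntegrable _ _)
    ((contDiff_slice1 hGt t).continuous.aestronglyMeasurable)
    (Filter.Eventually.of_forall (fun x hx y hy =>
      hC (x, y) ⟨Set.uIoc_subset_uIcc hx, hball hy⟩))
    intervalIntegrable_const
    (Filter.Eventually.of_forall (fun x _ y _ => hasDerivAt_dT h x y))).2

end prim

section ciplemmas

lemma cip_add_left (u v w : Fin 3 → ℂ) : cip (u + v) w = cip u w + cip v w := by
  simp [cip, add_mul, Finset.sum_add_distrib]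

lemma cip_smul_left (a : ℂ) (u w : Fin 3 → ℂ) : cip (a • u) w = a * cip u w := by
  simp [cip, Finset.mul_sum, mul_assoc]

lemma cip_add_right (u v w : Fin 3 → ℂ) : cip w (u + v) = cip w u + cip w v := by
  simp [cip, mul_add, Finset.sum_add_distrib]

lemma cip_sub_right (u v w : Fin 3 → ℂ) : cip w (u - v) = cip w u - cip w v := by
  simp [cip, mul_sub, Finset.sum_sub_distrib]

lemma cip_smul_right (a : ℂ) (u w : Fin 3 → ℂ) : cip w (a • u) = a * cip w u := by
  simp only [cip, Pi.smul_apply, smul_eq_mul, Finset.mul_sum]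
  exact Finset.sum_congr rfl fun i _ => by ring

lemma cip_cvec_cvec (u v : E3) : cip (cvec u) (cvec v) = ((⟪u, v⟫ : ℝ) : ℂ) := by
  simp only [cip, cvec, PiLp.inner_apply, RCLike.inner_apply, conj_trivial]
  norm_cast
  exact Finset.sum_congr rfl fun i _ => mul_comm _ _

end ciplemmas

section comp
/-- component derivative helper: from a vector `HasDerivAt`, get the complexified
component derivative. -/
lemma HasDerivAt.ccomp {F : ℝ → E3} {V : E3} {x : ℝ} (i : Fin 3)
    (h : HasDerivAt F V x) :
    HasDerivAt (fun y => ((F y i : ℝ) : ℂ)) ((V i : ℂ)) x := by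
  have h1 : HasDerivAt (fun y => F y i) (V i) x :=
    (EuclideanSpace.proj i (𝕜 := ℝ)).hasFDerivAt.comp_hasDerivAt x h
  exact Complex.ofRealCLM.hasFDerivAt.comp_hasDerivAt x h1
end comp


lemma inner_dT_orth {X Y : ℝ → ℝ → E3} (hX : ContDiff ℝ (⊤ : ℕ∞) (Function.uncurry X))
    (hY : ContDiff ℝ (⊤ : ℕ∞) (Function.uncurry Y)) {c : ℝ} (hc : ∀ s t, ⟪X s t, Y s t⟫ = c)
    (s t : ℝ) : ⟪X s t, dT Y s t⟫ + ⟪dT X s t, Y s t⟫ = 0 := by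
  have h1 : HasDerivAt (fun y => ⟪X s y, Y s y⟫)
      (⟪X s t, dT Y s t⟫ + ⟪dT X s t, Y s t⟫) t :=
    (hasDerivAt_dT hX s t).inner ℝ (hasDerivAt_dT hY s t)
  have h2 : (fun y => ⟪X s y, Y s y⟫) = fun _ => c := funext fun y => hc s y
  rw [h2] at h1
  exact h1.unique (hasDerivAt_const t c)

theorem stmt10
    (γ T N B : ℝ → ℝ → E3) (k τ : ℝ → ℝ → ℝ)
    (hγsm : ContDiff ℝ (⊤ : ℕ∞) (Function.uncurry γ))
    (hTsm : ContDiff ℝ (⊤ : ℕ∞) (Function.uncurry T))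
    (hNsm : ContDiff ℝ (⊤ : ℕ∞) (Function.uncurry N))
    (hBsm : ContDiff ℝ (⊤ : ℕ∞) (Function.uncurry B))
    (hksm : ContDiff ℝ (⊤ : ℕ∞) (Function.uncurry k))
    (hτsm : ContDiff ℝ (⊤ : ℕ∞) (Function.uncurry τ))
    (hkpos : ∀ s t, 0 < k s t)
    (hTdef : ∀ s t, dS γ s t = T s t)
    (horth : ∀ s t, ⟪T s t, T s t⟫ = 1 ∧ ⟪N s t, N s t⟫ = 1 ∧
      ⟪B s t, B s t⟫ = 1 ∧ ⟪T s t, N s t⟫ = 0 ∧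
      ⟪T s t, B s t⟫ = 0 ∧ ⟪N s t, B s t⟫ = 0)
    (hFS1 : ∀ s t, dS T s t = k s t • N s t)
    (hFS2 : ∀ s t, dS N s t = -(k s t) • T s t + τ s t • B s t)
    (hFS3 : ∀ s t, dS B s t = -(τ s t) • N s t)
    (ν μ α : ℝ → ℝ → ℝ)
    (hνsm : ContDiff ℝ (⊤ : ℕ∞) (Function.uncurry ν))
    (hμsm : ContDiff ℝ (⊤ : ℕ∞) (Function.uncurry μ))
    (hαsm : ContDiff ℝ (⊤ : ℕ∞) (Function.uncurry α))
    (hkin : ∀ s t, dT γ s t = ν s t • T s t + μ s t • N s t + α s t • B s t)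
    (hmixγ : ∀ s t, dS (dT γ) s t = dT (dS γ) s t)
    (hmixT : ∀ s t, dS (dT T) s t = dT (dS T) s t)
    (hmixN : ∀ s t, dS (dT N) s t = dT (dS N) s t)
    (hmixB : ∀ s t, dS (dT B) s t = dT (dS B) s t)
    (hν0 : ∀ s t, ν s t = 0)
    (hμ0 : ∀ s t, μ s t = 0)
    (hαk : ∀ s t, α s t = k s t)
    (R : ℝ → ℝ → ℝ)
    (hMt : ∀ s t, dT (Mf N B τ) s t =
      (Complex.I * (R s t : ℂ)) • Mf N B τ s t + ωf T N B τ s t • cvec (T s t))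
    :
    ∃ A : ℝ → ℝ, ∀ s t,
      Complex.I * dT (ψf k τ) s t + dS (dS (ψf k τ)) s t +
        (1/2 : ℂ) * ((‖ψf k τ s t‖ : ℝ) : ℂ)^2 * ψf k τ s t =
      ((A t : ℝ) : ℂ) * ψf k τ s t := by
  
  -- time derivative of T via the filament law
  have hTt : ∀ s t, dT T s t = dS k s t • B s t - (k s t * τ s t) • N s t := by
    intro s t
    have e1 : (fun y => T s y) = fun y => dS γ s y := funext fun y => (hTdef s y).symm
    have e2 : dT T s t = dT (dS γ) s t := by
      show deriv (fun y => T s y) t = _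
      rw [e1]; rfl
    rw [e2, ← hmixγ]
    have e3 : (fun x => dT γ x t) = fun x => k x t • B x t := by
      funext x; rw [hkin x t, hν0, hμ0, hαk]; simp
    have h4 : HasDerivAt (fun x => k x t • B x t)
        (k s t • dS B s t + dS k s t • B s t) s :=
      (hasDerivAt_dS hksm s t).smul (hasDerivAt_dS hBsm s t)
    have e4 : dS (dT γ) s t = k s t • dS B s t + dS k s t • B s t := by
      show deriv (fun x => dT γ x t) s = _
      rw [e3]; exact h4.deriv
    rw [e4, hFS3]
    module
  -- orthogonality facts for time derivatives
  have hNtN : ∀ s t, ⟪dT N s t, N s t⟫ = 0 := by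
    intro s t
    have h := inner_dT_orth hNsm hNsm (fun s t => (horth s t).2.1) s t
    have hcomm : ⟪N s t, dT N s t⟫ = ⟪dT N s t, N s t⟫ := real_inner_comm _ _
    rw [hcomm] at h; linarith
  have hBtB : ∀ s t, ⟪dT B s t, B s t⟫ = 0 := by
    intro s t
    have h := inner_dT_orth hBsm hBsm (fun s t => (horth s t).2.2.1) s t
    have hcomm : ⟪B s t, dT B s t⟫ = ⟪dT B s t, B s t⟫ := real_inner_comm _ _
    rw [hcomm] at h; linarith
  have hBtN : ∀ s t, ⟪dT B s t, N s t⟫ = -⟪dT N s t, B s t⟫ := by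
    intro s t
    have h := inner_dT_orth hNsm hBsm (fun s t => (horth s t).2.2.2.2.2) s t
    have hcomm : ⟪N s t, dT B s t⟫ = ⟪dT B s t, N s t⟫ := real_inner_comm _ _
    rw [hcomm] at h; linarith
  -- mixed partials of T : the vector identity
  have hTmix : ∀ s t, k s t • dT N s t + dT k s t • N s t =
      (dS k s t • (-(τ s t) • N s t) + dS (dS k) s t • B s t)
      - ((k s t * τ s t) • (-(k s t) • T s t + τ s t • B s t)
         + (dS k s t * τ s t + k s t * dS τ s t) • N s t) := by
    intro s t
    have e1 : dT (dS T) s t = k s t • dT N s t + dT k s t • N s t := by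
      have e : (fun y => dS T s y) = fun y => k s y • N s y := funext fun y => hFS1 s y
      show deriv (fun y => dS T s y) t = _
      rw [e]
      exact ((hasDerivAt_dT hksm s t).smul (hasDerivAt_dT hNsm s t)).deriv
    have e2 : dS (dT T) s t = (dS k s t • dS B s t + dS (dS k) s t • B s t)
        - ((k s t * τ s t) • dS N s t + (dS k s t * τ s t + k s t * dS τ s t) • N s t) := by
      have e : (fun x => dT T x t) = fun x => dS k x t • B x t - (k x t * τ x t) • N x t :=
        funext fun x => hTt x t
      show deriv (fun x => dT T x t) s = _
      rw [e]
      exact (((hasDerivAt_dS (contDiff_dS hksm) s t).smul (hasDerivAt_dS hBsm s t)).sub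
        (((hasDerivAt_dS hksm s t).mul (hasDerivAt_dS hτsm s t)).smul
          (hasDerivAt_dS hNsm s t))).deriv
    calc k s t • dT N s t + dT k s t • N s t = dT (dS T) s t := e1.symm
      _ = dS (dT T) s t := (hmixT s t).symm
      _ = _ := by rw [e2, hFS3, hFS2]
  -- the curvature time-derivative and second s-derivative identities
  have hkt : ∀ s t, dT k s t = -(2 * dS k s t * τ s t) - k s t * dS τ s t := by
    intro s t
    have h := congrArg (fun v : E3 => ⟪v, N s t⟫) (hTmix s t)
    obtain ⟨hTT, hNN, hBB, hTN, hTB, hNB⟩ := horth s t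
    have hBN : ⟪B s t, N s t⟫ = (0:ℝ) := by rw [real_inner_comm]; exact hNB
    simp only [inner_add_left, inner_sub_left, real_inner_smul_left,
      hNN, hBN, hTN, hNB, hNtN s t] at h
    linarith
  have hkss : ∀ s t, dS (dS k) s t
      = k s t * ⟪dT N s t, B s t⟫ + k s t * τ s t * τ s t := by
    intro s t
    have h := congrArg (fun v : E3 => ⟪v, B s t⟫) (hTmix s t)
    obtain ⟨hTT, hNN, hBB, hTN, hTB, hNB⟩ := horth s t
    have hNB' : ⟪N s t, B s t⟫ = (0:ℝ) := hNB
    have hTB' : ⟪T s t, B s t⟫ = (0:ℝ) := hTB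
    simp only [inner_add_left, inner_sub_left, real_inner_smul_left,
      hBB, hNB', hTB'] at h
    linarith
  -- s-derivative of β = ⟪N_t, B⟫
  have hβs : ∀ s t, HasDerivAt (fun x => ⟪dT N x t, B x t⟫)
      (dT τ s t - k s t * dS k s t) s := by
    intro s t
    have h0 : HasDerivAt (fun x => ⟪dT N x t, B x t⟫)
        (⟪dT N s t, dS B s t⟫ + ⟪dS (dT N) s t, B s t⟫) s :=
      (hasDerivAt_dS (contDiff_dT hNsm) s t).inner ℝ (hasDerivAt_dS hBsm s t)
    have e1 : dS (dT N) s t = ((-(k s t)) • dT T s t + (-(dT k s t)) • T s t)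
        + (τ s t • dT B s t + dT τ s t • B s t) := by
      rw [hmixN s t]
      have e : (fun y => dS N s y) = fun y => -(k s y) • T s y + τ s y • B s y :=
        funext fun y => hFS2 s y
      show deriv (fun y => dS N s y) t = _
      rw [e]
      exact (((hasDerivAt_dT hksm s t).neg.smul (hasDerivAt_dT hTsm s t)).add
        ((hasDerivAt_dT hτsm s t).smul (hasDerivAt_dT hBsm s t))).deriv
    have e2 : ⟪dT N s t, dS B s t⟫ + ⟪dS (dT N) s t, B s t⟫
        = dT τ s t - k s t * dS k s t := by
      rw [e1, hFS3 s t, hTt s t]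
      obtain ⟨hTT, hNN, hBB, hTN, hTB, hNB⟩ := horth s t
      have hTB' : ⟪T s t, B s t⟫ = (0:ℝ) := hTB
      have hNB' : ⟪N s t, B s t⟫ = (0:ℝ) := hNB
      simp only [inner_add_left, inner_sub_left, real_inner_smul_left,
        real_inner_smul_right, inner_sub_right, hBB, hNB', hTB', hNtN s t, hBtB s t]
      ring
    rw [← e2]; exact h0
  -- phase derivatives
  have hθs : ∀ s t, HasDerivAt (fun x => θf τ x t) (τ s t) s :=
    fun s t => hasDerivAt_prim_fst hτsm s t
  have hθt : ∀ s t, HasDerivAt (fun y => θf τ s y) (∫ u in (0:ℝ)..s, dT τ u t) t :=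
    fun s t => hasDerivAt_prim_snd hτsm s t
  have hηs : ∀ s t, HasDerivAt (fun x => ∫ u in (0:ℝ)..x, dT τ u t) (dT τ s t) s :=
    fun s t => hasDerivAt_prim_fst (contDiff_dT hτsm) s t
  -- derivatives of the phase factor
  have hfS : ∀ s t, HasDerivAt (fun x => Complex.exp (I * (θf τ x t : ℂ)))
      (Complex.exp (I * (θf τ s t : ℂ)) * (I * (τ s t : ℂ))) s := by
    intro s t
    have h1 : HasDerivAt (fun x => ((θf τ x t : ℝ) : ℂ)) ((τ s t : ℂ)) s :=
      Complex.ofRealCLM.hasFDerivAt.comp_hasDerivAt s (hθs s t)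
    exact (h1.const_mul I).cexp
  have hfT : ∀ s t, HasDerivAt (fun y => Complex.exp (I * (θf τ s y : ℂ)))
      (Complex.exp (I * (θf τ s t : ℂ)) * (I * ((∫ u in (0:ℝ)..s, dT τ u t : ℝ) : ℂ))) t := by
    intro s t
    have h1 : HasDerivAt (fun y => ((θf τ s y : ℝ) : ℂ))
        (((∫ u in (0:ℝ)..s, dT τ u t : ℝ) : ℂ)) t :=
      Complex.ofRealCLM.hasFDerivAt.comp_hasDerivAt t (hθt s t)
    exact (h1.const_mul I).cexp
  -- the time derivative of M
  have hMtv : ∀ s t, dT (Mf N B τ) s t =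
      Complex.exp (I * (θf τ s t : ℂ)) • (cvec (dT N s t) + I • cvec (dT B s t))
      + (Complex.exp (I * (θf τ s t : ℂ)) * (I * ((∫ u in (0:ℝ)..s, dT τ u t : ℝ) : ℂ))) •
        (cvec (N s t) + I • cvec (B s t)) := by
    intro s t
    have hg : HasDerivAt (fun y => (cvec (N s y) + I • cvec (B s y)))
        (cvec (dT N s t) + I • cvec (dT B s t)) t := by
      refine hasDerivAt_pi.2 fun i => ?_
      exact ((hasDerivAt_dT hNsm s t).ccomp i).add
        (((hasDerivAt_dT hBsm s t).ccomp i).const_mul I)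
    have h := (hfT s t).smul hg
    show deriv (fun y => Mf N B τ s y) t = _
    exact h.deriv
  -- extraction of R from the evolution law for M
  have hR : ∀ s t, R s t = (∫ u in (0:ℝ)..s, dT τ u t) - ⟪dT N s t, B s t⟫ := by
    intro s t
    have hmt := hMt s t
    rw [hMtv s t] at hmt
    have hw := congrArg (fun v => cip v
      ((starRingEnd ℂ (Complex.exp (I * (θf τ s t : ℂ)))) •
        (cvec (N s t) - I • cvec (B s t)))) hmt
    simp only [Mf] at hw
    simp only [cip_add_left, cip_smul_left, cip_smul_right, cip_sub_right,
      cip_cvec_cvec] at hw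
    obtain ⟨hTT, hNN, hBB, hTN, hTB, hNB⟩ := horth s t
    have hBN : ⟪B s t, N s t⟫ = (0:ℝ) := by rw [real_inner_comm]; exact hNB
    rw [hNN, hBB, hNB, hBN, hTN, hTB, hNtN s t, hBtB s t, hBtN s t] at hw
    push_cast at hw
    have hff : Complex.exp (I * (θf τ s t : ℂ)) *
        (starRingEnd ℂ) (Complex.exp (I * (θf τ s t : ℂ))) = 1 := by
      rw [← Complex.exp_conj, ← Complex.exp_add]
      simp [Complex.conj_ofReal]
    have key : ((R s t : ℝ) : ℂ) = ((∫ u in (0:ℝ)..s, dT τ u t : ℝ) : ℂ)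
        - ((⟪dT N s t, B s t⟫ : ℝ) : ℂ) := by
      linear_combination (I/2) * hw
        + (-(((R s t : ℝ) : ℂ) - ((∫ u in (0:ℝ)..s, dT τ u t : ℝ) : ℂ)
            + ((⟪dT N s t, B s t⟫ : ℝ) : ℂ))) * hff
        + ((starRingEnd ℂ (Complex.exp (I * (θf τ s t : ℂ)))) *
            Complex.exp (I * (θf τ s t : ℂ)) *
            (((⟪dT N s t, B s t⟫ : ℝ) : ℂ) + ((I*I-2)/2) *
              (((∫ u in (0:ℝ)..s, dT τ u t : ℝ) : ℂ) - ((R s t : ℝ) : ℂ)))) * Complex.I_mul_I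
    exact_mod_cast key
  -- derivatives of the wave function
  have hψT : ∀ s t, dT (ψf k τ) s t = ((dT k s t : ℝ) : ℂ) * Complex.exp (I * (θf τ s t : ℂ))
      + ((k s t : ℝ) : ℂ) * (Complex.exp (I * (θf τ s t : ℂ))
        * (I * ((∫ u in (0:ℝ)..s, dT τ u t : ℝ) : ℂ))) := by
    intro s t
    have h1 : HasDerivAt (fun y => ((k s y : ℝ) : ℂ)) ((dT k s t : ℝ) : ℂ) t :=
      Complex.ofRealCLM.hasFDerivAt.comp_hasDerivAt t (hasDerivAt_dT hksm s t)
    exact (h1.mul (hfT s t)).deriv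
  have hψS : ∀ s t, dS (ψf k τ) s t = ((dS k s t : ℝ) : ℂ) * Complex.exp (I * (θf τ s t : ℂ))
      + ((k s t : ℝ) : ℂ) * (Complex.exp (I * (θf τ s t : ℂ)) * (I * ((τ s t : ℝ) : ℂ))) := by
    intro s t
    have h1 : HasDerivAt (fun x => ((k x t : ℝ) : ℂ)) ((dS k s t : ℝ) : ℂ) s :=
      Complex.ofRealCLM.hasFDerivAt.comp_hasDerivAt s (hasDerivAt_dS hksm s t)
    exact (h1.mul (hfS s t)).deriv
  have hψSS : ∀ s t, dS (dS (ψf k τ)) s t =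
      (((dS (dS k) s t : ℝ) : ℂ) * Complex.exp (I * (θf τ s t : ℂ))
        + ((dS k s t : ℝ) : ℂ) * (Complex.exp (I * (θf τ s t : ℂ)) * (I * ((τ s t : ℝ) : ℂ))))
      + (((dS k s t : ℝ) : ℂ) * (Complex.exp (I * (θf τ s t : ℂ)) * (I * ((τ s t : ℝ) : ℂ)))
        + ((k s t : ℝ) : ℂ) * ((Complex.exp (I * (θf τ s t : ℂ)) * (I * ((τ s t : ℝ) : ℂ)))
            * (I * ((τ s t : ℝ) : ℂ))
          + Complex.exp (I * (θf τ s t : ℂ)) * (I * ((dS τ s t : ℝ) : ℂ)))) := by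
    intro s t
    have e : (fun x => dS (ψf k τ) x t) = fun x =>
        ((dS k x t : ℝ) : ℂ) * Complex.exp (I * (θf τ x t : ℂ))
        + ((k x t : ℝ) : ℂ) * (Complex.exp (I * (θf τ x t : ℂ)) * (I * ((τ x t : ℝ) : ℂ))) :=
      funext fun x => hψS x t
    show deriv (fun x => dS (ψf k τ) x t) s = _
    rw [e]
    have h1 : HasDerivAt (fun x => ((dS k x t : ℝ) : ℂ)) ((dS (dS k) s t : ℝ) : ℂ) s :=
      Complex.ofRealCLM.hasFDerivAt.comp_hasDerivAt s (hasDerivAt_dS (contDiff_dS hksm) s t)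
    have h2 : HasDerivAt (fun x => ((k x t : ℝ) : ℂ)) ((dS k s t : ℝ) : ℂ) s :=
      Complex.ofRealCLM.hasFDerivAt.comp_hasDerivAt s (hasDerivAt_dS hksm s t)
    have h3 : HasDerivAt (fun x => ((τ x t : ℝ) : ℂ)) ((dS τ s t : ℝ) : ℂ) s :=
      Complex.ofRealCLM.hasFDerivAt.comp_hasDerivAt s (hasDerivAt_dS hτsm s t)
    exact ((h1.mul (hfS s t)).add (h2.mul ((hfS s t).mul (h3.const_mul I)))).deriv
  -- modulus of the wave function
  have habs : ∀ s t, ‖ψf k τ s t‖ = k s t := by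
    intro s t
    simp [ψf, Complex.norm_exp, Complex.mul_re, abs_of_pos (hkpos s t)]
  -- the result
  refine ⟨fun t => k 0 t ^ 2 / 2 - R 0 t, ?_⟩
  intro s t
  have hder : ∀ x, HasDerivAt (fun x => k x t ^ 2 / 2 - R x t) 0 x := by
    intro x
    have e : (fun x => k x t ^ 2 / 2 - R x t)
        = fun x => k x t ^ 2 / 2 - ((∫ u in (0:ℝ)..x, dT τ u t) - ⟪dT N x t, B x t⟫) :=
      funext fun x => by rw [hR x t]
    rw [e]
    have h3 := (((hasDerivAt_dS hksm x t).pow 2).div_const 2).sub ((hηs x t).sub (hβs x t))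
    refine h3.congr_deriv ?_
    push_cast
    ring
  have hconst : k s t ^ 2 / 2 - R s t = k 0 t ^ 2 / 2 - R 0 t :=
    is_const_of_deriv_eq_zero (fun x => (hder x).differentiableAt)
      (fun x => (hder x).deriv) s 0
  have habs' : ((‖ψf k τ s t‖ : ℝ) : ℂ) = ((k s t : ℝ) : ℂ) := by rw [habs]
  rw [hψT s t, hψSS s t, habs']
  have hψ : ψf k τ s t = ((k s t : ℝ) : ℂ) * Complex.exp (I * (θf τ s t : ℂ)) := rfl
  rw [hψ]
  have hktC : ((dT k s t : ℝ) : ℂ) = -(2 * ((dS k s t : ℝ) : ℂ) * ((τ s t : ℝ) : ℂ))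
      - ((k s t : ℝ) : ℂ) * ((dS τ s t : ℝ) : ℂ) := by exact_mod_cast hkt s t
  have hkssC : ((dS (dS k) s t : ℝ) : ℂ) = ((k s t : ℝ) : ℂ) * ((⟪dT N s t, B s t⟫ : ℝ) : ℂ)
      + ((k s t : ℝ) : ℂ) * ((τ s t : ℝ) : ℂ) * ((τ s t : ℝ) : ℂ) := by
    exact_mod_cast hkss s t
  have hRC : ((R s t : ℝ) : ℂ) = ((∫ u in (0:ℝ)..s, dT τ u t : ℝ) : ℂ)
      - ((⟪dT N s t, B s t⟫ : ℝ) : ℂ) := by exact_mod_cast hR s t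
  have hconstC : ((k s t : ℝ) : ℂ) ^ 2 / 2 - ((R s t : ℝ) : ℂ)
      = ((k 0 t : ℝ) : ℂ) ^ 2 / 2 - ((R 0 t : ℝ) : ℂ) := by exact_mod_cast hconst
  push_cast
  linear_combination (I * Complex.exp (I * (θf τ s t : ℂ))) * hktC
    + Complex.exp (I * (θf τ s t : ℂ)) * hkssC
    + (((k s t : ℝ) : ℂ) * Complex.exp (I * (θf τ s t : ℂ))) * hRC
    + (((k s t : ℝ) : ℂ) * Complex.exp (I * (θf τ s t : ℂ))) * hconstC
    + (((k s t : ℝ) : ℂ) * Complex.exp (I * (θf τ s t : ℂ)) *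
        (((∫ u in (0:ℝ)..s, dT τ u t : ℝ) : ℂ) + ((τ s t : ℝ) : ℂ) ^ 2)) * Complex.I_mul_I
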